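/- Let X be a Banach space, let T = {T(t,s) : t, s > a₀} be an invertible evolution family on X, and let a₀* > a₀. Define S := { v ∈ X : sup_{t ≥ a₀*} ‖T(t,a₀*)v‖ < ∞ } and, for s ≥ a₀*, S(s) := { v ∈ X : sup_{t ≥ s} ‖T(t,s)v‖ < ∞ }. Suppose Z ⊂ X is a closed subspace with X = S ⊕ Z (direct sum). Then for every s ≥ a₀* one has T(s,a₀*)S = S(s) and X = S(s) ⊕ Z(s), where Z(s) := T(s,a₀*)Z. -/
import Mathlib


open Set Real

noncomputable section

variable {X : Type*} [NormedAddCommGroup X] [NormedSpace ℝ X] [CompleteSpace X]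

/-- An invertible evolution family on `X` with parameter `a₀ ∈ ℝ ∪ {-∞}` (modelled as
`EReal`), viewed as a two-parameter family `T t s` for all `t, s > a₀` (for `t < s`,
`T t s` is the inverse of `T s t`): `T t t = Id` for `t > a₀`; the two-sided cocycle
identity `T t s ∘ T s r = T t r` holds for all `t, s, r > a₀`; and for every `s > a₀`
and `v ∈ X`, the map `t ↦ T t s v` is continuous on `[s, ∞)`. -/
def IsInvertibleEvolutionFamily (a₀ : EReal) (T : ℝ → ℝ → X →L[ℝ] X) : Prop :=
  (∀ t : ℝ, a₀ < (t : EReal) → T t t = ContinuousLinearMap.id ℝ X) ∧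
  (∀ t s r : ℝ, a₀ < (t : EReal) → a₀ < (s : EReal) → a₀ < (r : EReal) →
    (T t s).comp (T s r) = T t r) ∧
  (∀ s : ℝ, a₀ < (s : EReal) → ∀ v : X, ContinuousOn (fun t => T t s v) (Set.Ici s))

/-- The stable set at time `s`: vectors with bounded forward orbit,
`S(s) = {v ∈ X : sup_{t ≥ s} ‖T t s v‖ < ∞}`. -/
def stableSet (T : ℝ → ℝ → X →L[ℝ] X) (s : ℝ) : Set X :=
  {v : X | ∃ M : ℝ, ∀ t : ℝ, s ≤ t → ‖T t s v‖ ≤ M}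

/-- `X = S ⊕ Z` as sets: every `v ∈ X` can be written uniquely as `v = v₁ + v₂` with
`v₁ ∈ S` and `v₂ ∈ Z`. -/
def DirectSumDecomp (S Z : Set X) : Prop :=
  ∀ v : X, ∃! p : X × X, p.1 ∈ S ∧ p.2 ∈ Z ∧ p.1 + p.2 = v

/-- Let `T` be an invertible evolution family, `a₀* > a₀`,
`S = S(a₀*)` the set of initial vectors with bounded forward orbit, and `Z` a closed
subspace with `X = S ⊕ Z`. Then for every `s ≥ a₀*`, `T(s, a₀*) S = S(s)` and
`X = S(s) ⊕ Z(s)`, where `Z(s) := T(s, a₀*) Z`. -/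
theorem stable_splitting_propagates
    (a₀ : EReal) (T : ℝ → ℝ → X →L[ℝ] X) (astar : ℝ) (Z : Submodule ℝ X)
    (hT : IsInvertibleEvolutionFamily a₀ T)
    (hastar : a₀ < (astar : EReal))
    (hZclosed : IsClosed (Z : Set X))
    (hsplit : DirectSumDecomp (stableSet T astar) (Z : Set X)) :
    ∀ s : ℝ, astar ≤ s →
      (T s astar) '' (stableSet T astar) = stableSet T s ∧
      DirectSumDecomp (stableSet T s) ((T s astar) '' (Z : Set X)) := by
  obtain ⟨hid, hcoc, hcont⟩ := hT
  intro s hs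
  have hs' : a₀ < (s : EReal) := lt_of_lt_of_le hastar (by exact_mod_cast hs)
  have hAB : ∀ t : ℝ, astar ≤ t → a₀ < (t : EReal) := fun t ht =>
    lt_of_lt_of_le hastar (by exact_mod_cast ht)
  have hA : ∀ v : X, T astar s (T s astar v) = v := by
    intro v
    have h1 := hcoc astar s astar hastar hs' hastar
    have h2 := hid astar hastar
    calc T astar s (T s astar v) = ((T astar s).comp (T s astar)) v := rfl
      _ = (T astar astar) v := by rw [h1]
      _ = v := by rw [h2]; rfl
  have hB : ∀ v : X, T s astar (T astar s v) = v := by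
    intro v
    have h1 := hcoc s astar s hs' hastar hs'
    have h2 := hid s hs'
    calc T s astar (T astar s v) = ((T s astar).comp (T astar s)) v := rfl
      _ = (T s s) v := by rw [h1]
      _ = v := by rw [h2]; rfl
  have hC : ∀ (t : ℝ), s ≤ t → ∀ v : X, T t s (T s astar v) = T t astar v := by
    intro t ht v
    have h1 := hcoc t s astar (hAB t (le_trans hs ht)) hs' hastar
    calc T t s (T s astar v) = ((T t s).comp (T s astar)) v := rfl
      _ = T t astar v := by rw [h1]
  have himg : (T s astar) '' (stableSet T astar) = stableSet T s := by
    ext w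
    constructor
    · rintro ⟨v, ⟨M, hM⟩, rfl⟩
      exact ⟨M, fun t ht => by rw [hC t ht v]; exact hM t (le_trans hs ht)⟩
    · rintro ⟨M, hM⟩
      refine ⟨T astar s w, ?_, hB w⟩
      have hcont' := hcont astar hastar (T astar s w)
      have hcomp : IsCompact (Set.Icc astar s) := isCompact_Icc
      have hsub : Set.Icc astar s ⊆ Set.Ici astar := Set.Icc_subset_Ici_self
      obtain ⟨C, hCb⟩ :=
        (hcomp.image_of_continuousOn ((hcont'.mono hsub).norm)).bddAbove
      refine ⟨max C M, fun t ht => ?_⟩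
      rcases le_total t s with hts | hts
      · exact le_max_of_le_left (hCb ⟨t, ⟨ht, hts⟩, rfl⟩)
      · have h3 := hC t hts (T astar s w)
        rw [hB w] at h3
        rw [← h3]
        exact le_max_of_le_right (hM t hts)
  refine ⟨himg, ?_⟩
  intro v
  obtain ⟨p, ⟨hp1, hp2, hpsum⟩, hpuniq⟩ := hsplit (T astar s v)
  refine ⟨(T s astar p.1, T s astar p.2), ⟨?_, ⟨p.2, hp2, rfl⟩, ?_⟩, ?_⟩
  · rw [← himg]; exact ⟨p.1, hp1, rfl⟩
  · show T s astar p.1 + T s astar p.2 = v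
    rw [← map_add, hpsum, hB v]
  · rintro ⟨q1, q2⟩ ⟨hq1, ⟨u2, hu2, rfl⟩, hqsum⟩
    rw [← himg] at hq1
    obtain ⟨u1, hu1, rfl⟩ := hq1
    have hup : (u1, u2) = p := by
      apply hpuniq
      refine ⟨hu1, hu2, ?_⟩
      have h4 := congrArg (T astar s) hqsum
      simp only [map_add, hA] at h4
      exact h4
    rw [← hup]
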